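/- arXiv:1710.09470 — 7 statements merged into one kernel-verified Lean document; each statement's English description precedes it below -/
import Mathlib

section
/- Let F : ℝⁿ → ℝⁿ be continuously differentiable, let x* ∈ ℝⁿ satisfy F(x*) = 0, and assume the Jacobian F′(x*) is invertible. Let 0 ≤ η_max < t < 1 be given constants and let (η_k) be a sequence of forcing terms with η_k ≤ η_max for all k. Then there exists ε > 0 such that for every x₀ with ‖x₀ − x*‖ < ε, every inexact Newton sequence (x_k) starting from x₀ with forcing terms (η_k) converges to x*, and moreover ‖F′(x*)(x_{k+1} − x*)‖ ≤ t · ‖F′(x*)(x_k − x*)‖ for all k. -/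
open Filter Topology

set_option maxHeartbeats 1000000 in
private theorem inexact_newton_aux {E : Type*} [NormedAddCommGroup E] [NormedSpace ℝ E]
    (F : E → E) (hF : ContDiff ℝ 1 F) (xs : E) (hxs : F xs = 0)
    (J : E ≃L[ℝ] E) (hJ : (J : E →L[ℝ] E) = fderiv ℝ F xs)
    (η : ℕ → ℝ) (ηmax t : ℝ)
    (hηmax : 0 ≤ ηmax) (hηt : ηmax < t) (ht : t < 1)
    (hη0 : ∀ k, 0 ≤ η k) (hη : ∀ k, η k ≤ ηmax) :
    ∃ ε > 0, ∀ x : ℕ → E,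
      ‖x 0 - xs‖ < ε →
      (∀ k, ‖F (x k) + fderiv ℝ F (x k) (x (k + 1) - x k)‖ ≤ η k * ‖F (x k)‖) →
      Tendsto x atTop (𝓝 xs) ∧
        ∀ k, ‖fderiv ℝ F xs (x (k + 1) - xs)‖ ≤ t * ‖fderiv ℝ F xs (x k - xs)‖ := by
  set A0 : E →L[ℝ] E := (J : E →L[ℝ] E) with hA0
  set c : ℝ := ‖(J.symm : E →L[ℝ] E)‖ with hc
  have hc0 : 0 ≤ c := norm_nonneg _
  have hηmax1 : ηmax < 1 := hηt.trans ht
  have ht0 : 0 < t := lt_of_le_of_lt hηmax hηt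
  have hlow : ∀ v : E, ‖v‖ ≤ c * ‖A0 v‖ := by
    intro v
    calc ‖v‖ = ‖(J.symm : E →L[ℝ] E) (A0 v)‖ := by simp [hA0]
    _ ≤ c * ‖A0 v‖ := (J.symm : E →L[ℝ] E).le_opNorm _
  set m : ℝ := min (1/2) ((t - ηmax)/8) with hm
  have hm0 : 0 < m := lt_min (by norm_num) (by linarith)
  set δ : ℝ := m / (c + 1) with hδ
  have hδ0 : 0 < δ := div_pos hm0 (by linarith)
  have hdc : δ * c ≤ m := by
    rw [hδ, div_mul_eq_mul_div, div_le_iff₀ (by linarith : (0:ℝ) < c + 1)]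
    nlinarith
  have hd0 : 0 ≤ δ * c := mul_nonneg hδ0.le hc0
  have hd_half : δ * c ≤ 1/2 := hdc.trans (min_le_left _ _)
  have hd8 : 8 * (δ * c) ≤ t - ηmax := by
    have := hdc.trans (min_le_right _ _)
    linarith
  -- ball where the derivative is δ-close to A0
  have hcont : Continuous fun y => fderiv ℝ F y := hF.continuous_fderiv one_ne_zero
  have h0 : ‖fderiv ℝ F xs - A0‖ < δ := by rw [← hJ]; simpa using hδ0
  have h2 : ∀ᶠ y in 𝓝 xs, ‖fderiv ℝ F y - A0‖ < δ :=
    ((hcont.sub continuous_const).norm.continuousAt).eventually (gt_mem_nhds h0)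
  obtain ⟨ρ', hρ'0, hball'⟩ := Metric.eventually_nhds_iff_ball.mp h2
  clear_value A0 c m δ
  set ρ : ℝ := ρ' / 2 with hρ
  have hρ0 : 0 < ρ := by positivity
  have hball : ∀ y : E, ‖y - xs‖ ≤ ρ → ‖fderiv ℝ F y - A0‖ ≤ δ := by
    intro y hy
    refine (hball' y ?_).le
    rw [Metric.mem_ball, dist_eq_norm]
    linarith
  -- mean value estimate
  have hMV : ∀ y : E, ‖y - xs‖ ≤ ρ → ‖F y - A0 (y - xs)‖ ≤ δ * ‖y - xs‖ := by
    intro y hy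
    have hymem : y ∈ Metric.closedBall xs ρ := by
      rw [Metric.mem_closedBall, dist_eq_norm]; exact hy
    have hder : ∀ z ∈ Metric.closedBall xs ρ,
        HasFDerivWithinAt (fun w => F w - A0 w) (fderiv ℝ F z - A0)
          (Metric.closedBall xs ρ) z := fun z _ =>
      (((hF.differentiable one_ne_zero z).hasFDerivAt).sub A0.hasFDerivAt).hasFDerivWithinAt
    have hbd : ∀ z ∈ Metric.closedBall xs ρ, ‖fderiv ℝ F z - A0‖ ≤ δ := by
      intro z hz
      exact hball z (by rwa [Metric.mem_closedBall, dist_eq_norm] at hz)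
    have hmv := Convex.norm_image_sub_le_of_norm_hasFDerivWithin_le hder hbd
      (convex_closedBall xs ρ) (Metric.mem_closedBall_self hρ0.le) hymem
    have heq : F y - A0 y - (F xs - A0 xs) = F y - A0 (y - xs) := by
      rw [hxs, map_sub]; abel
    rwa [heq] at hmv
  -- key one-step estimate
  have key : ∀ (k : ℕ) (xk xk1 : E), ‖xk - xs‖ ≤ ρ →
      ‖F xk + fderiv ℝ F xk (xk1 - xk)‖ ≤ η k * ‖F xk‖ →
      ‖A0 (xk1 - xs)‖ ≤ t * ‖A0 (xk - xs)‖ := by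
    intro k xk xk1 hxk hres
    have hE0 : ‖fderiv ℝ F xk - A0‖ ≤ δ := hball xk hxk
    obtain ⟨A, hA⟩ : ∃ A : E →L[ℝ] E, fderiv ℝ F xk = A := ⟨_, rfl⟩
    rw [hA] at hres hE0
    set u : E := xk - xs with hu'
    set s : E := xk1 - xk with hs'
    set N : ℝ := ‖A0 u‖ with hN
    have hN0 : 0 ≤ N := norm_nonneg _
    have hE : ‖A - A0‖ ≤ δ := hE0
    have he : ‖F xk - A0 u‖ ≤ δ * ‖u‖ := hMV xk hxk
    have hu : ‖u‖ ≤ c * N := hlow u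
    have hFk : ‖F xk‖ ≤ (1 + δ * c) * N := by
      have h1 : ‖F xk‖ ≤ δ * ‖u‖ + N := by
        calc ‖F xk‖ = ‖(F xk - A0 u) + A0 u‖ := by rw [sub_add_cancel]
        _ ≤ ‖F xk - A0 u‖ + ‖A0 u‖ := norm_add_le _ _
        _ ≤ δ * ‖u‖ + N := by rw [hN]; linarith
      nlinarith [mul_le_mul_of_nonneg_left hu hδ0.le]
    have hFk0 : 0 ≤ ‖F xk‖ := norm_nonneg _
    have hr : ‖F xk + A s‖ ≤ ηmax * ‖F xk‖ :=
      hres.trans (mul_le_mul_of_nonneg_right (hη k) (norm_nonneg _))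
    have hAs : ‖A s‖ ≤ (1 + ηmax) * ‖F xk‖ := by
      calc ‖A s‖ = ‖(F xk + A s) - F xk‖ := by rw [add_sub_cancel_left]
      _ ≤ ‖F xk + A s‖ + ‖F xk‖ := norm_sub_le _ _
      _ ≤ ηmax * ‖F xk‖ + ‖F xk‖ := by linarith
      _ = (1 + ηmax) * ‖F xk‖ := by ring
    have hAs0 : 0 ≤ ‖A s‖ := norm_nonneg _
    have hs1 : ‖s‖ ≤ c * ‖A0 s‖ := hlow s
    have hJs : ‖A0 s‖ ≤ ‖A s‖ + δ * ‖s‖ := by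
      calc ‖A0 s‖ = ‖A s - (A - A0) s‖ := by
            simp [ContinuousLinearMap.sub_apply]
      _ ≤ ‖A s‖ + ‖(A - A0) s‖ := norm_sub_le _ _
      _ ≤ ‖A s‖ + δ * ‖s‖ := by
          have h3 := (A - A0).le_opNorm s
          have h4 := mul_le_mul_of_nonneg_right hE (norm_nonneg s)
          linarith
    have hJs2 : ‖A0 s‖ ≤ 2 * ‖A s‖ := by
      nlinarith [mul_le_mul_of_nonneg_left hs1 hδ0.le,
        mul_le_mul_of_nonneg_right hd_half (norm_nonneg (A0 s))]
    have hsb : ‖s‖ ≤ 2 * c * ‖A s‖ := by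
      calc ‖s‖ ≤ c * ‖A0 s‖ := hs1
      _ ≤ c * (2 * ‖A s‖) := mul_le_mul_of_nonneg_left hJs2 hc0
      _ = 2 * c * ‖A s‖ := by ring
    have hkey : A0 (xk1 - xs) = (F xk + A s) - (F xk - A0 u) - (A - A0) s := by
      have h5 : xk1 - xs = u + s := by rw [hu', hs']; abel
      rw [h5, map_add]
      simp only [ContinuousLinearMap.sub_apply]
      abel
    have hfinal : ‖A0 (xk1 - xs)‖ ≤ ηmax * ‖F xk‖ + δ * ‖u‖ + δ * ‖s‖ := by
      rw [hkey]
      have h1 := norm_sub_le ((F xk + A s) - (F xk - A0 u)) ((A - A0) s)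
      have h2 := norm_sub_le (F xk + A s) (F xk - A0 u)
      have h3 := (A - A0).le_opNorm s
      have h4 := mul_le_mul_of_nonneg_right hE (norm_nonneg s)
      linarith
    -- combine
    have step1 : δ * ‖s‖ ≤ 2 * (δ * c) * ((1 + ηmax) * ‖F xk‖) := by
      nlinarith [mul_le_mul_of_nonneg_left hsb hδ0.le,
        mul_le_mul_of_nonneg_left hAs (mul_nonneg (by norm_num : (0:ℝ) ≤ 2)
          (mul_nonneg hδ0.le hc0))]
    have step2 : δ * ‖u‖ ≤ δ * c * N := by
      nlinarith [mul_le_mul_of_nonneg_left hu hδ0.le]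
    have step3 : ‖A0 (xk1 - xs)‖ ≤
        (ηmax + 2 * (δ * c) * (1 + ηmax)) * ‖F xk‖ + δ * c * N := by
      nlinarith
    have hcoef0 : 0 ≤ ηmax + 2 * (δ * c) * (1 + ηmax) := by nlinarith
    have step4 : ‖A0 (xk1 - xs)‖ ≤
        (ηmax + 2 * (δ * c) * (1 + ηmax)) * ((1 + δ * c) * N) + δ * c * N := by
      nlinarith [mul_le_mul_of_nonneg_left hFk hcoef0]
    have step5 : (ηmax + 2 * (δ * c) * (1 + ηmax)) * (1 + δ * c) + δ * c ≤ t := by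
      nlinarith [sq_nonneg (δ * c), mul_nonneg hd0 hd0]
    calc ‖A0 (xk1 - xs)‖
        ≤ (ηmax + 2 * (δ * c) * (1 + ηmax)) * ((1 + δ * c) * N) + δ * c * N := step4
      _ = ((ηmax + 2 * (δ * c) * (1 + ηmax)) * (1 + δ * c) + δ * c) * N := by ring
      _ ≤ t * N := mul_le_mul_of_nonneg_right step5 hN0
  -- choose ε
  clear_value ρ
  set ε : ℝ := ρ / (c * ‖A0‖ + 1) with hε
  have hA0n : (0:ℝ) ≤ ‖A0‖ := norm_nonneg _
  have hden : (0:ℝ) < c * ‖A0‖ + 1 := by positivity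
  have hε0 : 0 < ε := div_pos hρ0 hden
  have hερ : ε ≤ ρ := by
    rw [hε, div_le_iff₀ hden]
    have h9 : 0 ≤ ρ * (c * ‖A0‖) :=
      mul_nonneg hρ0.le (mul_nonneg hc0 hA0n)
    linarith
  clear_value ε
  refine ⟨ε, hε0, ?_⟩
  intro x hx0 hres
  set B : ℝ := ‖A0 (x 0 - xs)‖ with hB
  have hB0 : (0:ℝ) ≤ B := norm_nonneg _
  have hBbound : c * B ≤ ρ := by
    have h1 : B ≤ ‖A0‖ * ‖x 0 - xs‖ := A0.le_opNorm _
    have h2 : c * B ≤ c * ‖A0‖ * ε := by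
      calc c * B ≤ c * (‖A0‖ * ‖x 0 - xs‖) := mul_le_mul_of_nonneg_left h1 hc0
      _ = (c * ‖A0‖) * ‖x 0 - xs‖ := by ring
      _ ≤ (c * ‖A0‖) * ε := mul_le_mul_of_nonneg_left hx0.le (mul_nonneg hc0 hA0n)
    have h3 : c * ‖A0‖ * ε ≤ ρ := by
      rw [hε]
      have h4 : c * ‖A0‖ * (ρ / (c * ‖A0‖ + 1)) ≤ (c * ‖A0‖ + 1) * (ρ / (c * ‖A0‖ + 1)) := by
        apply mul_le_mul_of_nonneg_right (by linarith) (by positivity)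
      have h5 : (c * ‖A0‖ + 1) * (ρ / (c * ‖A0‖ + 1)) = ρ := by
        field_simp
      linarith
    linarith
  have main : ∀ k, ‖x k - xs‖ ≤ ρ ∧ ‖A0 (x k - xs)‖ ≤ t ^ k * B := by
    intro k
    induction k with
    | zero => exact ⟨hx0.le.trans hερ, by simp [hB]⟩
    | succ k ih =>
      obtain ⟨ihball, ihbound⟩ := ih
      have hk := key k (x k) (x (k + 1)) ihball (hres k)
      have hbound : ‖A0 (x (k + 1) - xs)‖ ≤ t ^ (k + 1) * B := by
        calc ‖A0 (x (k + 1) - xs)‖ ≤ t * ‖A0 (x k - xs)‖ := hk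
        _ ≤ t * (t ^ k * B) := mul_le_mul_of_nonneg_left ihbound ht0.le
        _ = t ^ (k + 1) * B := by ring
      refine ⟨?_, hbound⟩
      have h1 : ‖x (k + 1) - xs‖ ≤ c * (t ^ (k + 1) * B) :=
        (hlow _).trans (mul_le_mul_of_nonneg_left hbound hc0)
      have h2 : t ^ (k + 1) ≤ 1 := pow_le_one₀ ht0.le ht.le
      calc ‖x (k + 1) - xs‖ ≤ c * (t ^ (k + 1) * B) := h1
      _ ≤ c * B := mul_le_mul_of_nonneg_left (mul_le_of_le_one_left hB0 h2) hc0
      _ ≤ ρ := hBbound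
  constructor
  · rw [tendsto_iff_norm_sub_tendsto_zero]
    have hsq : ∀ k, ‖x k - xs‖ ≤ (c * B) * t ^ k := by
      intro k
      have h1 : ‖x k - xs‖ ≤ c * (t ^ k * B) :=
        (hlow _).trans (mul_le_mul_of_nonneg_left (main k).2 hc0)
      calc ‖x k - xs‖ ≤ c * (t ^ k * B) := h1
      _ = (c * B) * t ^ k := by ring
    have hlim : Tendsto (fun k : ℕ => (c * B) * t ^ k) atTop (𝓝 0) := by
      have h6 := (tendsto_pow_atTop_nhds_zero_of_lt_one ht0.le ht).const_mul (c * B)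
      simpa using h6
    exact squeeze_zero (fun k => norm_nonneg _) hsq hlim
  · intro k
    rw [← hJ]
    exact key k (x k) (x (k + 1)) (main k).1 (hres k)

/-- **Local convergence of the inexact Newton method** (Dembo–Eisenstat–Steihaug).
If `F : ℝⁿ → ℝⁿ` is continuously differentiable, `F x* = 0`, the Jacobian `F′(x*)` is
invertible, and the forcing terms satisfy `η k ≤ η_max < t < 1`, then there is `ε > 0`
such that every inexact Newton sequence starting within `ε` of `x*` converges to `x*`,
with `‖F′(x*)(x_{k+1} − x*)‖ ≤ t ‖F′(x*)(x_k − x*)‖` for all `k`. -/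
theorem inexact_newton_local_convergence
    (n : ℕ) (F : EuclideanSpace ℝ (Fin n) → EuclideanSpace ℝ (Fin n))
    (hF : ContDiff ℝ 1 F)
    (xs : EuclideanSpace ℝ (Fin n)) (hxs : F xs = 0)
    (hinv : ∃ J : EuclideanSpace ℝ (Fin n) ≃L[ℝ] EuclideanSpace ℝ (Fin n),
      (J : EuclideanSpace ℝ (Fin n) →L[ℝ] EuclideanSpace ℝ (Fin n)) = fderiv ℝ F xs)
    (η : ℕ → ℝ) (ηmax t : ℝ)
    (hηmax : 0 ≤ ηmax) (hηt : ηmax < t) (ht : t < 1)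
    (hη0 : ∀ k, 0 ≤ η k) (hη : ∀ k, η k ≤ ηmax) :
    ∃ ε > 0, ∀ x : ℕ → EuclideanSpace ℝ (Fin n),
      ‖x 0 - xs‖ < ε →
      (∀ k, ‖F (x k) + fderiv ℝ F (x k) (x (k + 1) - x k)‖ ≤ η k * ‖F (x k)‖) →
      Tendsto x atTop (𝓝 xs) ∧
        ∀ k, ‖fderiv ℝ F xs (x (k + 1) - xs)‖ ≤ t * ‖fderiv ℝ F xs (x k - xs)‖ := by
  obtain ⟨J, hJ⟩ := hinv
  exact inexact_newton_aux F hF xs hxs J hJ η ηmax t hηmax hηt ht hη0 hη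
end

section
/- Let F : ℝⁿ → ℝⁿ be continuously differentiable, let x* ∈ ℝⁿ satisfy F(x*) = 0, and assume the Jacobian F′(x*) is invertible. Suppose (x_k) is an inexact Newton sequence with forcing terms (η_k) that converges to x*, with x_k ≠ x* for all k. If η_k → 0 as k → ∞, then the convergence is superlinear: ‖x_{k+1} − x*‖ / ‖x_k − x*‖ → 0 as k → ∞. -/
set_option maxHeartbeats 1000000
set_option synthInstance.maxHeartbeats 200000


open Filter Topology

/-- **Superlinear convergence of the inexact Newton method**.
If `F : ℝⁿ → ℝⁿ` is continuously differentiable, `F x* = 0`, the Jacobian `F′(x*)` is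
invertible, and an inexact Newton sequence `(x_k)` (with forcing terms `η_k ∈ [0,1)`,
`x_k ≠ x*`) converges to `x*` while `η_k → 0`, then the convergence is superlinear:
`‖x_{k+1} − x*‖ / ‖x k − x*‖ → 0`. -/
theorem inexact_newton_superlinear_convergence
    (n : ℕ) (F : EuclideanSpace ℝ (Fin n) → EuclideanSpace ℝ (Fin n))
    (hF : ContDiff ℝ 1 F)
    (xs : EuclideanSpace ℝ (Fin n)) (hxs : F xs = 0)
    (hinv : ∃ J : EuclideanSpace ℝ (Fin n) ≃L[ℝ] EuclideanSpace ℝ (Fin n),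
      (J : EuclideanSpace ℝ (Fin n) →L[ℝ] EuclideanSpace ℝ (Fin n)) = fderiv ℝ F xs)
    (η : ℕ → ℝ) (hη : ∀ k, 0 ≤ η k ∧ η k < 1)
    (x : ℕ → EuclideanSpace ℝ (Fin n))
    (hstep : ∀ k, ‖F (x k) + fderiv ℝ F (x k) (x (k + 1) - x k)‖ ≤ η k * ‖F (x k)‖)
    (hconv : Tendsto x atTop (𝓝 xs))
    (hne : ∀ k, x k ≠ xs)
    (hη0 : Tendsto η atTop (𝓝 0)) :
    Tendsto (fun k => ‖x (k + 1) - xs‖ / ‖x k - xs‖) atTop (𝓝 0) := by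
  obtain ⟨J, hJ⟩ := hinv
  have hdiff : Differentiable ℝ F := hF.differentiable one_ne_zero
  have hcont : Continuous (fderiv ℝ F) := hF.continuous_fderiv one_ne_zero
  set J' : EuclideanSpace ℝ (Fin n) →L[ℝ] EuclideanSpace ℝ (Fin n) :=
    (J : EuclideanSpace ℝ (Fin n) →L[ℝ] EuclideanSpace ℝ (Fin n)) with hJ'def
  set C : ℝ := ‖(J.symm : EuclideanSpace ℝ (Fin n) →L[ℝ] EuclideanSpace ℝ (Fin n))‖ + 1 with hCdef
  have hC1 : (1 : ℝ) ≤ C := le_add_of_nonneg_left (norm_nonneg _)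
  have hC0 : (0 : ℝ) < C := lt_of_lt_of_le one_pos hC1
  have hCle : ∀ v : EuclideanSpace ℝ (Fin n), ‖v‖ ≤ C * ‖J' v‖ := by
    intro v
    have h1 : ‖v‖ = ‖J.symm (J' v)‖ := by rw [hJ'def]; simp
    have h2 : ‖J.symm (J' v)‖ ≤
        ‖(J.symm : EuclideanSpace ℝ (Fin n) →L[ℝ] EuclideanSpace ℝ (Fin n))‖ * ‖J' v‖ :=
      (J.symm : EuclideanSpace ℝ (Fin n) →L[ℝ] EuclideanSpace ℝ (Fin n)).le_opNorm _
    have h3 : (0:ℝ) ≤ ‖J' v‖ := norm_nonneg _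
    nlinarith [norm_nonneg ((J.symm : EuclideanSpace ℝ (Fin n) →L[ℝ]
      EuclideanSpace ℝ (Fin n)))]
  set M : ℝ := ‖J'‖ + 1 with hMdef
  have hM1 : (1:ℝ) ≤ M := le_add_of_nonneg_left (norm_nonneg _)
  have hM0 : (0:ℝ) < M + 2 := by linarith
  rw [NormedAddCommGroup.tendsto_nhds_zero]
  intro ε hε
  set c : ℝ := min (1/(2*C)) (ε/(4*C*(M+2))) with hcdef
  have hc0 : 0 < c := lt_min (by positivity) (by positivity)
  have hc1 : c ≤ 1 := by
    have h := min_le_left (1/(2*C)) (ε/(4*C*(M+2)))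
    have : 1/(2*C) ≤ 1 := by
      rw [div_le_one (by linarith)]; linarith
    linarith [hcdef ▸ h]
  have hCc : C * c ≤ 1/2 := by
    have h := min_le_left (1/(2*C)) (ε/(4*C*(M+2)))
    have h2 : C * c ≤ C * (1/(2*C)) :=
      mul_le_mul_of_nonneg_left h hC0.le
    have h3 : C * (1/(2*C)) = 1/2 := by field_simp
    linarith
  have hfinal : 2*C*c*(M+2) ≤ ε/2 := by
    have h := min_le_right (1/(2*C)) (ε/(4*C*(M+2)))
    have h2 : (2*C*(M+2)) * c ≤ (2*C*(M+2)) * (ε/(4*C*(M+2))) :=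
      mul_le_mul_of_nonneg_left h (by positivity)
    have h3 : (2*C*(M+2)) * (ε/(4*C*(M+2))) = ε/2 := by field_simp; ring
    nlinarith
  clear_value c C M
  -- find a ball around xs on which the derivative is close to J'
  have hg : ∀ᶠ t in 𝓝 xs, ‖fderiv ℝ F t - J'‖ < c := by
    have hco : ContinuousAt (fun t => ‖fderiv ℝ F t - J'‖) xs :=
      ((hcont.sub continuous_const).norm).continuousAt
    have h0 : ‖fderiv ℝ F xs - J'‖ = 0 := by rw [← hJ, sub_self, norm_zero]
    have := hco.tendsto
    rw [h0] at this
    exact this (Iio_mem_nhds hc0)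
  obtain ⟨r, hr0, hball⟩ := Metric.eventually_nhds_iff_ball.mp hg
  have hMVT : ∀ y ∈ Metric.ball xs r, ‖F y - F xs - J' (y - xs)‖ ≤ c * ‖y - xs‖ := by
    intro y hy
    exact (convex_ball xs r).norm_image_sub_le_of_norm_fderiv_le'
      (fun t _ => hdiff t) (fun t ht => (hball t ht).le)
      (Metric.mem_ball_self hr0) hy
  have h1 : ∀ᶠ k in atTop, x k ∈ Metric.ball xs r :=
    hconv (Metric.ball_mem_nhds xs hr0)
  have h2 : ∀ᶠ k in atTop, x (k+1) ∈ Metric.ball xs r :=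
    (hconv.comp (tendsto_add_atTop_nat 1)) (Metric.ball_mem_nhds xs hr0)
  have h3 : ∀ᶠ k in atTop, η k < c := hη0 (Iio_mem_nhds hc0)
  filter_upwards [h1, h2, h3] with k hk1 hk2 hk3
  set a : EuclideanSpace ℝ (Fin n) := x k - xs with hadef
  set b : EuclideanSpace ℝ (Fin n) := x (k+1) - xs with hbdef
  set u : EuclideanSpace ℝ (Fin n) →L[ℝ] EuclideanSpace ℝ (Fin n) := fderiv ℝ F (x k) with hudef
  have ha0 : (0:ℝ) < ‖a‖ := by
    rw [norm_pos_iff]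
    exact sub_ne_zero.mpr (hne k)
  -- linearization error at x k
  have hFa : ‖F (x k) - J' a‖ ≤ c * ‖a‖ := by
    have := hMVT (x k) hk1
    rwa [hxs, sub_zero] at this
  have hFnorm : ‖F (x k)‖ ≤ M * ‖a‖ := by
    have h4 : ‖F (x k)‖ ≤ ‖F (x k) - J' a‖ + ‖J' a‖ := by
      have := norm_add_le (F (x k) - J' a) (J' a)
      simpa using this
    have h5 : ‖J' a‖ ≤ ‖J'‖ * ‖a‖ := J'.le_opNorm a
    nlinarith
  -- residual bound
  have hba : x (k+1) - x k = b - a := by rw [hadef, hbdef]; abel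
  have hres : ‖F (x k) + u (b - a)‖ ≤ c * (M * ‖a‖) := by
    have := hstep k
    rw [hba] at this
    have h6 : η k * ‖F (x k)‖ ≤ c * (M * ‖a‖) := by
      have hηk := (hη k).1
      have h7 : (0:ℝ) ≤ ‖F (x k)‖ := norm_nonneg _
      nlinarith
    linarith
  -- derivative difference bound
  have hu : ‖J' - u‖ ≤ c := by
    have := hball (x k) hk1
    rw [norm_sub_rev]
    exact this.le
  -- the algebraic identity
  have hid : J' b = (F (x k) + u (b - a)) + (J' a - F (x k)) + ((J' - u) (b - a)) := by
    simp only [ContinuousLinearMap.sub_apply, map_sub]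
    abel
  have hkey : ‖b‖ ≤ C * (c * (M * ‖a‖) + c * ‖a‖ + c * (‖b‖ + ‖a‖)) := by
    have hb1 : ‖b‖ ≤ C * ‖J' b‖ := hCle b
    have hn1 : ‖J' b‖ ≤ ‖F (x k) + u (b - a)‖ + ‖J' a - F (x k)‖ + ‖(J' - u) (b - a)‖ := by
      rw [hid]
      exact norm_add₃_le
    have hn2 : ‖J' a - F (x k)‖ ≤ c * ‖a‖ := by rw [norm_sub_rev]; exact hFa
    have hn3 : ‖(J' - u) (b - a)‖ ≤ c * (‖b‖ + ‖a‖) := by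
      have h8 : ‖(J' - u) (b - a)‖ ≤ ‖J' - u‖ * ‖b - a‖ := (J' - u).le_opNorm _
      have h9 : ‖b - a‖ ≤ ‖b‖ + ‖a‖ := norm_sub_le _ _
      nlinarith [norm_nonneg (J' - u), norm_nonneg (b - a)]
    have := hb1.trans (mul_le_mul_of_nonneg_left (by linarith : ‖J' b‖ ≤
      c * (M * ‖a‖) + c * ‖a‖ + c * (‖b‖ + ‖a‖)) hC0.le)
    linarith
  have hb2 : ‖b‖ ≤ (ε/2) * ‖a‖ := by
    have hbn : (0:ℝ) ≤ ‖b‖ := norm_nonneg _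
    have e1 : C * c * ‖b‖ ≤ (1/2) * ‖b‖ := mul_le_mul_of_nonneg_right hCc hbn
    have e2 : 2*C*c*(M+2) * ‖a‖ ≤ (ε/2) * ‖a‖ := mul_le_mul_of_nonneg_right hfinal (norm_nonneg a)
    nlinarith [e1, e2]
  have hq : ‖b‖ / ‖a‖ < ε := by
    rw [div_lt_iff₀ ha0]
    nlinarith
  have hqnn : (0:ℝ) ≤ ‖b‖ / ‖a‖ := div_nonneg (norm_nonneg _) ha0.le
  simpa [Real.norm_eq_abs, abs_of_nonneg hqnn] using hq
end

section
/- Let F : ℝⁿ → ℝⁿ be continuously differentiable, let x* ∈ ℝⁿ satisfy F(x*) = 0, and assume the Jacobian F′(x*) is invertible. Suppose moreover that F′ is Lipschitz continuous at x*, i.e. there exist L > 0 and δ > 0 such that ‖F′(x) − F′(x*)‖ ≤ L ‖x − x*‖ (operator norm) for all x with ‖x − x*‖ < δ. If (x_k) is an inexact Newton sequence with forcing terms (η_k) converging to x*, and there is a constant C > 0 with η_k ≤ C ‖F(x_k)‖ for all k, then the convergence is quadratic: there exist K > 0 and N ∈ ℕ such that ‖x_{k+1} − x*‖ ≤ K ‖x_k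 − x*‖² for all k ≥ N. -/
open Filter Topology

/-- **Quadratic convergence of the inexact Newton method**.
If `F : ℝⁿ → ℝⁿ` is continuously differentiable, `F x* = 0`, the Jacobian `F′(x*)` is
invertible and Lipschitz continuous at `x*`, and an inexact Newton sequence `(x_k)`
converging to `x*` has forcing terms `η_k ≤ C ‖F(x_k)‖`, then the convergence is
quadratic: eventually `‖x_{k+1} − x*‖ ≤ K ‖x_k − x*‖²`. -/
theorem inexact_newton_quadratic_convergence
    (n : ℕ) (F : EuclideanSpace ℝ (Fin n) → EuclideanSpace ℝ (Fin n))
    (hF : ContDiff ℝ 1 F)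
    (xs : EuclideanSpace ℝ (Fin n)) (hxs : F xs = 0)
    (hinv : ∃ J : EuclideanSpace ℝ (Fin n) ≃L[ℝ] EuclideanSpace ℝ (Fin n),
      (J : EuclideanSpace ℝ (Fin n) →L[ℝ] EuclideanSpace ℝ (Fin n)) = fderiv ℝ F xs)
    (L δ : ℝ) (hL : 0 < L) (hδ : 0 < δ)
    (hLip : ∀ y : EuclideanSpace ℝ (Fin n), ‖y - xs‖ < δ →
      ‖fderiv ℝ F y - fderiv ℝ F xs‖ ≤ L * ‖y - xs‖)
    (η : ℕ → ℝ) (hη : ∀ k, 0 ≤ η k ∧ η k < 1)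
    (x : ℕ → EuclideanSpace ℝ (Fin n))
    (hstep : ∀ k, ‖F (x k) + fderiv ℝ F (x k) (x (k + 1) - x k)‖ ≤ η k * ‖F (x k)‖)
    (hconv : Tendsto x atTop (𝓝 xs))
    (C : ℝ) (hC : 0 < C) (hηC : ∀ k, η k ≤ C * ‖F (x k)‖) :
    ∃ K > (0 : ℝ), ∃ N : ℕ, ∀ k ≥ N, ‖x (k + 1) - xs‖ ≤ K * ‖x k - xs‖ ^ 2 := by
  obtain ⟨J, hJ⟩ := hinv
  set J0 : EuclideanSpace ℝ (Fin n) →L[ℝ] EuclideanSpace ℝ (Fin n) := fderiv ℝ F xs with hJ0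
  have hdiff : ∀ z, DifferentiableAt ℝ F z := fun z => hF.differentiable one_ne_zero z
  set c : ℝ := ‖(J.symm : EuclideanSpace ℝ (Fin n) →L[ℝ] EuclideanSpace ℝ (Fin n))‖ with hc
  have hc0 : 0 ≤ c := norm_nonneg _
  have hcv : ∀ v : EuclideanSpace ℝ (Fin n), ‖v‖ ≤ c * ‖J0 v‖ := by
    intro v
    have hv : v = J.symm (J0 v) := by
      rw [← hJ]; simp
    calc ‖v‖ = ‖J.symm (J0 v)‖ := by rw [← hv]
      _ ≤ c * ‖J0 v‖ :=
        (J.symm : EuclideanSpace ℝ (Fin n) →L[ℝ] EuclideanSpace ℝ (Fin n)).le_opNorm _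
  -- Taylor-type estimate from the Lipschitz bound on the derivative
  have taylor : ∀ y : EuclideanSpace ℝ (Fin n), ‖y - xs‖ < δ →
      ‖F y - J0 (y - xs)‖ ≤ L * ‖y - xs‖ * ‖y - xs‖ := by
    intro y hy
    have key : ‖(fun z => F z - J0 z) y - (fun z => F z - J0 z) xs‖
        ≤ (L * ‖y - xs‖) * ‖y - xs‖ := by
      refine Convex.norm_image_sub_le_of_norm_fderiv_le (𝕜 := ℝ)
        (f := fun z => F z - J0 z) (C := L * ‖y - xs‖)
        (s := Metric.closedBall xs ‖y - xs‖) (x := xs) (y := y) ?_ ?_ ?_ ?_ ?_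
      · intro z _; exact (hdiff z).sub J0.differentiableAt
      · intro z hz
        have hz' : ‖z - xs‖ ≤ ‖y - xs‖ := by
          simpa [dist_eq_norm] using hz
        have hfd : fderiv ℝ (fun z => F z - J0 z) z = fderiv ℝ F z - J0 := by
          rw [fderiv_fun_sub (hdiff z) J0.differentiableAt, J0.fderiv]
        rw [hfd]
        calc ‖fderiv ℝ F z - J0‖ ≤ L * ‖z - xs‖ := hLip z (lt_of_le_of_lt hz' hy)
          _ ≤ L * ‖y - xs‖ := mul_le_mul_of_nonneg_left hz' hL.le
      · exact convex_closedBall _ _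
      · simp [Metric.mem_closedBall, dist_eq_norm]
      · simp [Metric.mem_closedBall, dist_eq_norm]
    have heq : (fun z => F z - J0 z) y - (fun z => F z - J0 z) xs = F y - J0 (y - xs) := by
      simp only [hxs, map_sub]
      abel
    rw [heq] at key
    linarith [key]
  set M : ℝ := ‖J0‖ + L with hM
  have hM0 : 0 < M := by positivity
  -- bound on ‖F (x k)‖
  have hFb : ∀ y : EuclideanSpace ℝ (Fin n), ‖y - xs‖ < δ → ‖y - xs‖ ≤ 1 →
      ‖F y‖ ≤ M * ‖y - xs‖ := by
    intro y hy hy1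
    have h1 := taylor y hy
    have h2 : ‖J0 (y - xs)‖ ≤ ‖J0‖ * ‖y - xs‖ := J0.le_opNorm _
    have h3 : ‖F y‖ ≤ ‖F y - J0 (y - xs)‖ + ‖J0 (y - xs)‖ := by
      simpa using norm_add_le (F y - J0 (y - xs)) (J0 (y - xs))
    nlinarith [norm_nonneg (y - xs), mul_nonneg (mul_nonneg hL.le (norm_nonneg (y - xs))) (sub_nonneg.mpr hy1)]
  -- choose the neighborhood
  set ε : ℝ := min δ (min 1 (1 / (2 * (c * L + 1)))) with hε
  have hε0 : 0 < ε := by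
    apply lt_min hδ
    apply lt_min one_pos
    positivity
  obtain ⟨N, hN⟩ := (Metric.tendsto_atTop.mp hconv) ε hε0
  refine ⟨2 * c * (C * M ^ 2 + 2 * L) + 1, by positivity, N, ?_⟩
  intro k hk
  set e : EuclideanSpace ℝ (Fin n) := x k - xs with he
  set e' : EuclideanSpace ℝ (Fin n) := x (k + 1) - xs with he'
  set A : EuclideanSpace ℝ (Fin n) →L[ℝ] EuclideanSpace ℝ (Fin n) := fderiv ℝ F (x k) with hA
  have heε : ‖e‖ < ε := by
    have := hN k hk
    simpa [he, dist_eq_norm] using this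
  have heδ : ‖e‖ < δ := lt_of_lt_of_le heε (min_le_left _ _)
  have he1 : ‖e‖ ≤ 1 := le_of_lt (lt_of_lt_of_le heε ((min_le_right _ _).trans (min_le_left _ _)))
  have hecL : c * L * ‖e‖ ≤ 1 / 2 := by
    have h1 : ‖e‖ ≤ 1 / (2 * (c * L + 1)) :=
      le_of_lt (lt_of_lt_of_le heε ((min_le_right _ _).trans (min_le_right _ _)))
    have h2 : 0 < 2 * (c * L + 1) := by positivity
    have h3 : c * L * ‖e‖ ≤ c * L * (1 / (2 * (c * L + 1))) :=
      mul_le_mul_of_nonneg_left h1 (mul_nonneg hc0 hL.le)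
    have h4 : c * L * (1 / (2 * (c * L + 1))) ≤ 1 / 2 := by
      rw [mul_one_div, div_le_iff₀ h2]
      nlinarith
    linarith
  -- the key identity
  have hid : J0 e' = (F (x k) + A (x (k + 1) - x k)) + (J0 - A) e' + (A - J0) e
      + (J0 e - F (x k)) := by
    have h1 : x (k + 1) - x k = e' - e := by rw [he, he']; abel
    rw [h1]
    simp only [map_sub, ContinuousLinearMap.sub_apply]
    abel
  -- bound each term
  have hr : ‖F (x k) + A (x (k + 1) - x k)‖ ≤ C * M ^ 2 * ‖e‖ ^ 2 := by
    have h1 := hstep k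
    have h2 := hηC k
    have h3 := (hη k).1
    have h4 : ‖F (x k)‖ ≤ M * ‖e‖ := hFb (x k) heδ he1
    have h5 : (0:ℝ) ≤ ‖F (x k)‖ := norm_nonneg _
    have h6 : (0:ℝ) ≤ ‖e‖ := norm_nonneg _
    calc ‖F (x k) + A (x (k + 1) - x k)‖ ≤ η k * ‖F (x k)‖ := h1
      _ ≤ (C * ‖F (x k)‖) * ‖F (x k)‖ := mul_le_mul_of_nonneg_right h2 h5
      _ = C * (‖F (x k)‖ * ‖F (x k)‖) := by ring
      _ ≤ C * ((M * ‖e‖) * (M * ‖e‖)) :=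
        mul_le_mul_of_nonneg_left (mul_self_le_mul_self h5 h4) hC.le
      _ = C * M ^ 2 * ‖e‖ ^ 2 := by ring
  have hALip : ‖A - J0‖ ≤ L * ‖e‖ := hLip (x k) heδ
  have hb1 : ‖(J0 - A) e'‖ ≤ L * ‖e‖ * ‖e'‖ := by
    calc ‖(J0 - A) e'‖ ≤ ‖J0 - A‖ * ‖e'‖ := (J0 - A).le_opNorm _
      _ = ‖A - J0‖ * ‖e'‖ := by rw [norm_sub_rev]
      _ ≤ L * ‖e‖ * ‖e'‖ := mul_le_mul_of_nonneg_right hALip (norm_nonneg _)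
  have hb2 : ‖(A - J0) e‖ ≤ L * ‖e‖ * ‖e‖ := by
    calc ‖(A - J0) e‖ ≤ ‖A - J0‖ * ‖e‖ := (A - J0).le_opNorm _
      _ ≤ L * ‖e‖ * ‖e‖ := mul_le_mul_of_nonneg_right hALip (norm_nonneg _)
  have hb3 : ‖J0 e - F (x k)‖ ≤ L * ‖e‖ * ‖e‖ := by
    rw [norm_sub_rev]
    exact taylor (x k) heδ
  have htri : ‖J0 e'‖ ≤ ‖F (x k) + A (x (k + 1) - x k)‖ + ‖(J0 - A) e'‖ + ‖(A - J0) e‖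
      + ‖J0 e - F (x k)‖ := by
    have t1 := norm_add_le ((F (x k) + A (x (k + 1) - x k)) + (J0 - A) e' + (A - J0) e)
      (J0 e - F (x k))
    have t2 := norm_add_le ((F (x k) + A (x (k + 1) - x k)) + (J0 - A) e') ((A - J0) e)
    have t3 := norm_add_le (F (x k) + A (x (k + 1) - x k)) ((J0 - A) e')
    rw [hid]
    linarith
  have hmain : ‖e'‖ ≤ c * ‖J0 e'‖ := hcv e'
  have hbnd : ‖e'‖ ≤ c * (C * M ^ 2 * ‖e‖ ^ 2 + L * ‖e‖ * ‖e'‖ + L * ‖e‖ * ‖e‖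
      + L * ‖e‖ * ‖e‖) := by
    calc ‖e'‖ ≤ c * ‖J0 e'‖ := hmain
      _ ≤ c * (C * M ^ 2 * ‖e‖ ^ 2 + L * ‖e‖ * ‖e'‖ + L * ‖e‖ * ‖e‖ + L * ‖e‖ * ‖e‖) := by
        apply mul_le_mul_of_nonneg_left _ hc0
        linarith [htri, hr, hb1, hb2, hb3]
  have he'0 : (0:ℝ) ≤ ‖e'‖ := norm_nonneg _
  have he0 : (0:ℝ) ≤ ‖e‖ := norm_nonneg _
  have hhalf : (1 / 2 - c * L * ‖e‖) * ‖e'‖ ≥ 0 :=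
    mul_nonneg (by linarith) he'0
  have hs1 : (c * L * ‖e‖) * ‖e'‖ ≤ (1 / 2) * ‖e'‖ :=
    mul_le_mul_of_nonneg_right hecL he'0
  have hbnd' : ‖e'‖ ≤ c * C * M ^ 2 * ‖e‖ ^ 2 + (c * L * ‖e‖) * ‖e'‖ + 2 * c * L * ‖e‖ ^ 2 := by
    calc ‖e'‖ ≤ c * (C * M ^ 2 * ‖e‖ ^ 2 + L * ‖e‖ * ‖e'‖ + L * ‖e‖ * ‖e‖ + L * ‖e‖ * ‖e‖) :=
        hbnd
      _ = c * C * M ^ 2 * ‖e‖ ^ 2 + (c * L * ‖e‖) * ‖e'‖ + 2 * c * L * ‖e‖ ^ 2 := by ring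
  have hgoal : (2 * c * (C * M ^ 2 + 2 * L) + 1) * ‖e‖ ^ 2
      = 2 * (c * C * M ^ 2 * ‖e‖ ^ 2) + 2 * (2 * c * L * ‖e‖ ^ 2) + ‖e‖ ^ 2 := by ring
  show ‖e'‖ ≤ (2 * c * (C * M ^ 2 + 2 * L) + 1) * ‖e‖ ^ 2
  rw [hgoal]
  linarith [hbnd', hs1, sq_nonneg ‖e‖]
end

section
/- Let A be a real symmetric positive definite n×n matrix, b, x₀ ∈ ℝⁿ, and set r₀ = b − A x₀. For every k with 1 ≤ k ≤ dim K_n(A, r₀), there exists a unique vector x_k ∈ x₀ + K_k(A, r₀) such that the residual b − A x_k is orthogonal (with respect to the Euclidean inner product) to every vector of K_k(A, r₀). -/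
open Matrix
open scoped RealInnerProductSpace

/-- The `k`-th Krylov subspace `K_k(A, r₀) = span{r₀, A r₀, …, A^{k−1} r₀}` in
Euclidean `n`-space. -/
noncomputable def krylovSubspace (n : ℕ) (A : Matrix (Fin n) (Fin n) ℝ)
    (r₀ : EuclideanSpace ℝ (Fin n)) (k : ℕ) : Submodule ℝ (EuclideanSpace ℝ (Fin n)) :=
  Submodule.span ℝ (Set.range fun i : Fin k => ((Matrix.toEuclideanLin A) ^ (i : ℕ)) r₀)

/-- **Existence and uniqueness of the conjugate-gradient iterate.** If `A` is symmetric
positive definite, `r₀ = b − A x₀`, and `1 ≤ k ≤ dim K_n(A, r₀)`, then there is a unique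
`x_k ∈ x₀ + K_k(A, r₀)` whose residual `b − A x_k` is orthogonal (Euclidean inner
product) to every vector of `K_k(A, r₀)`. -/
theorem cg_iterate_exists_unique
    (n : ℕ) (A : Matrix (Fin n) (Fin n) ℝ)
    (hsymm : Aᵀ = A)
    (hpd : ∀ x : EuclideanSpace ℝ (Fin n), x ≠ 0 → 0 < ⟪x, Matrix.toEuclideanLin A x⟫)
    (b x₀ : EuclideanSpace ℝ (Fin n))
    (r₀ : EuclideanSpace ℝ (Fin n)) (hr₀ : r₀ = b - Matrix.toEuclideanLin A x₀)
    (k : ℕ) (hk1 : 1 ≤ k) (hkd : k ≤ Module.finrank ℝ (krylovSubspace n A r₀ n)) :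
    ∃! x : EuclideanSpace ℝ (Fin n),
      x - x₀ ∈ krylovSubspace n A r₀ k ∧
        ∀ y ∈ krylovSubspace n A r₀ k, ⟪b - Matrix.toEuclideanLin A x, y⟫ = 0 := by
  classical
  set T := Matrix.toEuclideanLin A with hT
  set V := krylovSubspace n A r₀ k with hV
  -- positivity: nonzero elements of V have positive A-energy
  have hpos : ∀ v : EuclideanSpace ℝ (Fin n), (∀ y ∈ V, ⟪T v, y⟫ = 0) → v ∈ V → v = 0 := by
    intro v hv hvV
    by_contra hne
    have h1 : (0:ℝ) < ⟪v, T v⟫ := hpd v hne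
    have h2 : ⟪T v, v⟫ = 0 := hv v hvV
    rw [real_inner_comm] at h2
    exact absurd h2 (ne_of_gt h1)
  have hr₀V : r₀ ∈ V := by
    apply Submodule.subset_span
    exact ⟨⟨0, hk1⟩, by simp⟩
  have hproj : ∀ v : EuclideanSpace ℝ (Fin n), ∀ w ∈ V,
      ⟪v - (Submodule.orthogonalProjectionOnto V v : EuclideanSpace ℝ (Fin n)), w⟫ = 0 :=
    fun v w hw => Submodule.starProjection_inner_eq_zero v w hw
  let L : V →ₗ[ℝ] V :=
    { toFun := fun z => Submodule.orthogonalProjectionOnto V (T (z : EuclideanSpace ℝ (Fin n)))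
      map_add' := by intro a b; simp
      map_smul' := by intro c a; simp }
  have hinj : Function.Injective L := by
    rw [injective_iff_map_eq_zero]
    intro z hz
    have hz' : (Submodule.orthogonalProjectionOnto V (T (z : EuclideanSpace ℝ (Fin n))) :
        EuclideanSpace ℝ (Fin n)) = 0 := by
      have : (L z : EuclideanSpace ℝ (Fin n)) = 0 := by rw [hz]; rfl
      exact this
    have key : ∀ y ∈ V, ⟪T (z : EuclideanSpace ℝ (Fin n)), y⟫ = 0 := by
      intro y hy
      have := hproj (T (z : EuclideanSpace ℝ (Fin n))) y hy
      rwa [hz', sub_zero] at this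
    have := hpos z key z.2
    exact Subtype.ext this
  have hsurj : Function.Surjective L := (LinearMap.injective_iff_surjective).mp hinj
  obtain ⟨z, hz⟩ := hsurj ⟨r₀, hr₀V⟩
  have hzco : (Submodule.orthogonalProjectionOnto V (T (z : EuclideanSpace ℝ (Fin n))) :
      EuclideanSpace ℝ (Fin n)) = r₀ := by
    have : (L z : EuclideanSpace ℝ (Fin n)) = r₀ := by rw [hz]
    exact this
  refine ⟨x₀ + (z : EuclideanSpace ℝ (Fin n)), ⟨by simpa using z.2, ?_⟩, ?_⟩
  · intro y hy
    have hres : b - T (x₀ + (z : EuclideanSpace ℝ (Fin n))) =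
        -(T (z : EuclideanSpace ℝ (Fin n)) -
          (Submodule.orthogonalProjectionOnto V (T (z : EuclideanSpace ℝ (Fin n))) :
            EuclideanSpace ℝ (Fin n))) := by
      rw [hzco, map_add, hr₀]
      abel
    rw [hres, inner_neg_left, hproj _ y hy, neg_zero]
  · rintro x' ⟨hx'V, hx'o⟩
    have hdV : x' - (x₀ + (z : EuclideanSpace ℝ (Fin n))) ∈ V := by
      have := Submodule.sub_mem V hx'V z.2
      have heq : x' - (x₀ + (z : EuclideanSpace ℝ (Fin n))) =
          (x' - x₀) - (z : EuclideanSpace ℝ (Fin n)) := by abel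
      rwa [heq]
    have hxo : ∀ y ∈ V, ⟪b - T (x₀ + (z : EuclideanSpace ℝ (Fin n))), y⟫ = 0 := by
      intro y hy
      have hres : b - T (x₀ + (z : EuclideanSpace ℝ (Fin n))) =
          -(T (z : EuclideanSpace ℝ (Fin n)) -
            (Submodule.orthogonalProjectionOnto V (T (z : EuclideanSpace ℝ (Fin n))) :
              EuclideanSpace ℝ (Fin n))) := by
        rw [hzco, map_add, hr₀]
        abel
      rw [hres, inner_neg_left, hproj _ y hy, neg_zero]
    have hd0 : ∀ y ∈ V, ⟪T (x' - (x₀ + (z : EuclideanSpace ℝ (Fin n)))), y⟫ = 0 := by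
      intro y hy
      have h1 := hx'o y hy
      have h2 := hxo y hy
      have : ⟪(b - T (x₀ + (z : EuclideanSpace ℝ (Fin n)))) - (b - T x'), y⟫ = 0 := by
        rw [inner_sub_left, h1, h2, sub_zero]
      have heq : (b - T (x₀ + (z : EuclideanSpace ℝ (Fin n)))) - (b - T x') =
          T (x' - (x₀ + (z : EuclideanSpace ℝ (Fin n)))) := by
        rw [map_sub]
        abel
      rwa [heq] at this
    have := hpos _ hd0 hdV
    have : x' = x₀ + (z : EuclideanSpace ℝ (Fin n)) := by
      have h := sub_eq_zero.mp this
      exact h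
    exact this
end

section
/- Let A be an invertible real n×n matrix, b, x₀ ∈ ℝⁿ, and set r₀ = b − A x₀. For every k with 1 ≤ k ≤ dim K_n(A, r₀), there exists a unique vector x_k ∈ x₀ + K_k(A, r₀) such that the residual b − A x_k is orthogonal (with respect to the Euclidean inner product) to every vector of the image subspace A·K_k(A, r₀) = {A z : z ∈ K_k(A, r₀)}. -/
open Matrix
open scoped RealInnerProductSpace

/-- **Existence and uniqueness of the minimal-residual Krylov iterate.** If `A` is
invertible, `r₀ = b − A x₀`, and `1 ≤ k ≤ dim K_n(A, r₀)`, then there is a unique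
`x_k ∈ x₀ + K_k(A, r₀)` whose residual `b − A x_k` is orthogonal (Euclidean inner
product) to every vector of the image subspace `A·K_k(A, r₀)`. -/
theorem minres_iterate_exists_unique
    (n : ℕ) (A : Matrix (Fin n) (Fin n) ℝ) (hA : IsUnit A)
    (b x₀ : EuclideanSpace ℝ (Fin n))
    (r₀ : EuclideanSpace ℝ (Fin n)) (hr₀ : r₀ = b - Matrix.toEuclideanLin A x₀)
    (k : ℕ) (hk1 : 1 ≤ k) (hkd : k ≤ Module.finrank ℝ (krylovSubspace n A r₀ n)) :
    ∃! x : EuclideanSpace ℝ (Fin n),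
      x - x₀ ∈ krylovSubspace n A r₀ k ∧
        ∀ z ∈ krylovSubspace n A r₀ k,
          ⟪b - Matrix.toEuclideanLin A x, Matrix.toEuclideanLin A z⟫ = 0 := by
  classical
  set f : EuclideanSpace ℝ (Fin n) →ₗ[ℝ] EuclideanSpace ℝ (Fin n) :=
    Matrix.toEuclideanLin A with hf
  have hinj : Function.Injective f := by
    have hdet : IsUnit A.det := A.isUnit_iff_isUnit_det.mp hA
    have h1 : A⁻¹ * A = 1 := Matrix.nonsing_inv_mul A hdet
    intro x y hxy
    have h2 := congrArg (Matrix.toEuclideanLin A⁻¹) hxy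
    simp only [hf, Matrix.toEuclideanLin_apply, Equiv.apply_symm_apply,
      Matrix.mulVec_mulVec, h1, Matrix.one_mulVec] at h2
    exact h2
  set K := krylovSubspace n A r₀ k with hK
  set W := K.map f with hW
  set p := W.orthogonalProjectionOnto r₀ with hp
  have hperp : r₀ - (p : EuclideanSpace ℝ (Fin n)) ∈ Wᗮ :=
    W.sub_starProjection_mem_orthogonal r₀
  obtain ⟨d, hdK, hdp⟩ := Submodule.mem_map.mp p.2
  refine ⟨x₀ + d, ⟨by simpa using hdK, ?_⟩, ?_⟩
  · intro z hz
    have hres : b - f (x₀ + d) = r₀ - (p : EuclideanSpace ℝ (Fin n)) := by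
      rw [map_add, hr₀, ← hdp]; abel
    have hzW : f z ∈ W := Submodule.mem_map_of_mem hz
    have := (Submodule.mem_orthogonal' W _).mp hperp (f z) hzW
    rw [hres]; exact this
  · rintro y ⟨hyK, hy⟩
    have hxK : (x₀ + d) - x₀ ∈ K := by simpa using hdK
    have hdiff : y - (x₀ + d) ∈ K := by
      have h := K.sub_mem hyK hxK
      simp only [add_sub_cancel_left] at h
      rwa [sub_sub] at h
    have hwW : f (y - (x₀ + d)) ∈ W := Submodule.mem_map_of_mem hdiff
    have hx' : ∀ z ∈ K, ⟪b - f (x₀ + d), f z⟫ = 0 := by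
      intro z hz
      have hres : b - f (x₀ + d) = r₀ - (p : EuclideanSpace ℝ (Fin n)) := by
        rw [map_add, hr₀, ← hdp]; abel
      rw [hres]
      exact (Submodule.mem_orthogonal' W _).mp hperp (f z) (Submodule.mem_map_of_mem hz)
    have hzero : ⟪f (y - (x₀ + d)), f (y - (x₀ + d))⟫ = 0 := by
      have h1 := hy _ hdiff
      have h2 := hx' _ hdiff
      have : ⟪(b - f (x₀ + d)) - (b - f y), f (y - (x₀ + d))⟫ = 0 := by
        rw [inner_sub_left, h1, h2]; ring
      have heq : (b - f (x₀ + d)) - (b - f y) = f (y - (x₀ + d)) := by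
        rw [map_sub]; abel
      rwa [heq] at this
    have : f (y - (x₀ + d)) = 0 := inner_self_eq_zero.mp hzero
    have : y - (x₀ + d) = 0 := hinj (by simpa using this)
    exact sub_eq_zero.mp this
end

section
/- Let F : ℝⁿ → ℝⁿ be differentiable at x with derivative F′(x), let s ∈ ℝⁿ, η ∈ [0,1), and θ ∈ (0,1]. If ‖F(x) + F′(x) s‖ ≤ η ‖F(x)‖, then the backtracked step θs satisfies the inexact Newton condition with the updated forcing term 1 − θ(1 − η): namely ‖F(x) + F′(x)(θ s)‖ ≤ (1 − θ(1 − η)) ‖F(x)‖, and 1 − θ(1 − η) ∈ [0,1). -/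
/-- **Backtracking preserves the inexact Newton condition.** If the trial step `s`
satisfies `‖F(x) + F′(x) s‖ ≤ η ‖F(x)‖` with `η ∈ [0,1)` and `θ ∈ (0,1]`, then the
shortened step `θ s` satisfies the inexact Newton condition with the updated forcing
term `1 − θ(1 − η)`, which again lies in `[0,1)`. -/
theorem backtracking_inexact_newton_condition
    (n : ℕ) (F : EuclideanSpace ℝ (Fin n) → EuclideanSpace ℝ (Fin n))
    (x : EuclideanSpace ℝ (Fin n)) (hF : DifferentiableAt ℝ F x)
    (s : EuclideanSpace ℝ (Fin n)) (η θ : ℝ)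
    (hη0 : 0 ≤ η) (hη1 : η < 1) (hθ0 : 0 < θ) (hθ1 : θ ≤ 1)
    (h : ‖F x + fderiv ℝ F x s‖ ≤ η * ‖F x‖) :
    ‖F x + fderiv ℝ F x (θ • s)‖ ≤ (1 - θ * (1 - η)) * ‖F x‖ ∧
      0 ≤ 1 - θ * (1 - η) ∧ 1 - θ * (1 - η) < 1 := by
  have key : F x + fderiv ℝ F x (θ • s)
      = (1 - θ) • F x + θ • (F x + fderiv ℝ F x s) := by
    rw [map_smul]
    module
  refine ⟨?_, ?_, ?_⟩
  · calc ‖F x + fderiv ℝ F x (θ • s)‖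
        ≤ ‖(1 - θ) • F x‖ + ‖θ • (F x + fderiv ℝ F x s)‖ := by
          rw [key]; exact norm_add_le _ _
      _ = (1 - θ) * ‖F x‖ + θ * ‖F x + fderiv ℝ F x s‖ := by
          rw [norm_smul, norm_smul, Real.norm_of_nonneg (by linarith),
            Real.norm_of_nonneg hθ0.le]
      _ ≤ (1 - θ) * ‖F x‖ + θ * (η * ‖F x‖) := by
          have := mul_le_mul_of_nonneg_left h hθ0.le
          linarith
      _ = (1 - θ * (1 - η)) * ‖F x‖ := by ring
  · nlinarith
  · nlinarith
end

section
/- Let F : ℝⁿ → ℝⁿ be Fréchet differentiable at x with derivative F′(x) and suppose F(x) ≠ 0. Let η ∈ [0,1), t ∈ (0,1), θ ∈ (0,1), and let s ∈ ℝⁿ satisfy ‖F(x) + F′(x) s‖ ≤ η ‖F(x)‖. Then the backtracking loop terminates: there exists j ∈ ℕ such that the shortened step θ^j s satisfies the sufficient-decrease condition ‖F(x + θ^j s)‖ ≤ (1 − t · θ^j (1 − η)) ‖F(x)‖, i.e. ‖F(x + s_j)‖ ≤ [1 − t(1 − η_j)] ‖F(x)‖ with s_j = θ^j s and η_j = 1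 − θ^j(1 − η). -/
/-- **Finite termination of the backtracking loop.** If `F` is Fréchet differentiable
at `x`, `F(x) ≠ 0`, `η ∈ [0,1)`, `t ∈ (0,1)`, `θ ∈ (0,1)`, and the trial step `s`
satisfies the inexact Newton condition `‖F(x) + F′(x)s‖ ≤ η‖F(x)‖`, then after finitely
many backtracks the sufficient-decrease condition holds:
`‖F(x + θ^j s)‖ ≤ (1 − t θ^j (1 − η)) ‖F(x)‖` for some `j ∈ ℕ`. -/
theorem backtracking_terminates
    (n : ℕ) (F : EuclideanSpace ℝ (Fin n) → EuclideanSpace ℝ (Fin n))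
    (x : EuclideanSpace ℝ (Fin n)) (hF : DifferentiableAt ℝ F x)
    (hFx : F x ≠ 0)
    (s : EuclideanSpace ℝ (Fin n)) (η t θ : ℝ)
    (hη0 : 0 ≤ η) (hη1 : η < 1) (ht0 : 0 < t) (ht1 : t < 1)
    (hθ0 : 0 < θ) (hθ1 : θ < 1)
    (h : ‖F x + fderiv ℝ F x s‖ ≤ η * ‖F x‖) :
    ∃ j : ℕ, ‖F (x + θ ^ j • s)‖ ≤ (1 - t * θ ^ j * (1 - η)) * ‖F x‖ := by
  set d := fderiv ℝ F x s with hd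
  have hFpos : 0 < ‖F x‖ := norm_pos_iff.mpr hFx
  have hg : HasDerivAt (fun τ : ℝ => F (x + τ • s)) d 0 := by
    have h1 : HasDerivAt (fun τ : ℝ => x + τ • s) s 0 := by
      simpa using ((hasDerivAt_id (0 : ℝ)).smul_const s).const_add x
    have h2 : HasFDerivAt F (fderiv ℝ F x) (x + (0 : ℝ) • s) := by
      simpa using hF.hasFDerivAt
    exact h2.comp_hasDerivAt 0 h1
  rw [hasDerivAt_iff_isLittleO] at hg
  have hεpos : 0 < (1 - t) * (1 - η) * ‖F x‖ := by
    have := sub_pos.mpr ht1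
    have := sub_pos.mpr hη1
    positivity
  have hev := hg.def hεpos
  have hpow : Filter.Tendsto (fun j : ℕ => θ ^ j) Filter.atTop (nhds 0) :=
    tendsto_pow_atTop_nhds_zero_of_lt_one hθ0.le hθ1
  obtain ⟨j, hj⟩ := (hpow.eventually hev).exists
  refine ⟨j, ?_⟩
  simp only [zero_smul, add_zero, sub_zero] at hj
  set τ := θ ^ j with hτ
  have hτ0 : 0 < τ := pow_pos hθ0 j
  have hτ1 : τ ≤ 1 := pow_le_one₀ hθ0.le hθ1.le
  have hnormτ : ‖τ‖ = τ := abs_of_pos hτ0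
  rw [hnormτ] at hj
  have key : ‖F (x + τ • s)‖ ≤ ‖F (x + τ • s) - F x - τ • d‖ + ‖F x + τ • d‖ := by
    calc ‖F (x + τ • s)‖ = ‖(F (x + τ • s) - F x - τ • d) + (F x + τ • d)‖ := by
          congr 1; abel
      _ ≤ _ := norm_add_le _ _
  have hlin : ‖F x + τ • d‖ ≤ (1 - τ) * ‖F x‖ + τ * (η * ‖F x‖) := by
    calc ‖F x + τ • d‖ = ‖(1 - τ) • F x + τ • (F x + d)‖ := by
          congr 1
          rw [sub_smul, one_smul, smul_add]; abel
      _ ≤ ‖(1 - τ) • F x‖ + ‖τ • (F x + d)‖ := norm_add_le _ _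
      _ = (1 - τ) * ‖F x‖ + τ * ‖F x + d‖ := by
          rw [norm_smul, norm_smul, Real.norm_eq_abs, Real.norm_eq_abs,
            abs_of_nonneg (by linarith), abs_of_pos hτ0]
      _ ≤ (1 - τ) * ‖F x‖ + τ * (η * ‖F x‖) := by
          gcongr
  have := key.trans (add_le_add hj hlin)
  nlinarith [this, hFpos, hτ0, mul_pos hτ0 hFpos]
end
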